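/- arXiv:1209.4239 — 3 statements merged into one kernel-verified Lean document; each statement's English description precedes it below -/
import Mathlib

section
/- For every nonzero integer q, the degree of the Riley polynomial φ_q(u) equals 2q−1 if q > 0 and 2|q| if q < 0, and its leading coefficient is ±1. -/
/-!
Because `λ₊λ₋ = 1` and `λ₊ + λ₋ = u² + 2`, the sequence `S_k` satisfies
`S_{k+1} = (u² + 2) S_k - S_{k-1}`: it is a Vieta–Fibonacci polynomial in `u² + 2`, monic of
degree `2k - 2` for `k ≥ 1`, with `S_0 = 0` and `S_{-k} = -S_k`. For `q > 0` the leading term of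
`φ_q = (1 - u) S_q - S_{q-1}` is that of `-u S_q`; for `q < 0`,
`φ_q = S_{|q|+1} - (1 - u) S_{|q|}` has the leading term of `S_{|q|+1}`. The defining relation
determines `φ_q`, since it fixes `r φ_q(u)` for every square root `r` of `u⁴ + 4u²`, hence
`(u⁴ + 4u²) φ_q(u)`.
-/

open Polynomial

/-- `λ₊(u) = ((u²+2) + r)/2` where `r` is a square root of `u⁴+4u²`. -/
noncomputable def lamp (u r : ℂ) : ℂ := (u ^ 2 + 2 + r) / 2

/-- `λ₋(u) = ((u²+2) - r)/2` where `r` is a square root of `u⁴+4u²`. -/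
noncomputable def lamm (u r : ℂ) : ℂ := (u ^ 2 + 2 - r) / 2

/-- `P` is the Riley polynomial `φ_q`, characterized by
`(λ₊ - λ₋)·φ_q(u) = (1-u)(λ₊^q - λ₋^q) - (λ₊^{q-1} - λ₋^{q-1})`. -/
def RileyRel (q : ℤ) (P : Polynomial ℤ) : Prop :=
  ∀ u r : ℂ, r ^ 2 = u ^ 4 + 4 * u ^ 2 →
    (lamp u r - lamm u r) * (Polynomial.aeval u P : ℂ) =
      (1 - u) * ((lamp u r) ^ q - (lamm u r) ^ q) -
        ((lamp u r) ^ (q - 1) - (lamm u r) ^ (q - 1))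

namespace Polynomial

variable {R : Type*} [CommRing R]

theorem natDegree_X_sq_add_two [Nontrivial R] : (X ^ 2 + 2 : R[X]).natDegree = 2 := by
  compute_degree!

variable {p : R[X]}

theorem Monic.natDegree_one_sub_X_mul [Nontrivial R] (hp : p.Monic) :
    ((1 - X) * p).natDegree = p.natDegree + 1 := by
  rw [show (1 - X) * p = -((X - C 1) * p) by rw [map_one]; ring, natDegree_neg,
    (monic_X_sub_C 1).natDegree_mul hp, natDegree_X_sub_C, add_comm]

theorem Monic.leadingCoeff_one_sub_X_mul (hp : p.Monic) :
    ((1 - X) * p).leadingCoeff = -1 := by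
  rw [show (1 - X) * p = -((X - C 1) * p) by rw [map_one]; ring, leadingCoeff_neg,
    ((monic_X_sub_C 1).mul hp).leadingCoeff]

end Polynomial

namespace Polynomial.Chebyshev

variable (R : Type*) [CommRing R]

theorem S_natCast_monic_and_natDegree [Nontrivial R] (n : ℕ) :
    (S R n).Monic ∧ (S R n).natDegree = n := by
  induction n using Nat.twoStepInduction with
  | zero => simp
  | one => simp
  | more n ih1 ih2 =>
    obtain ⟨hm1, hd1⟩ := ih2
    have hXS : (X * S R (n + 1 : ℕ)).Monic := monic_X.mul hm1
    have hXSd : (X * S R (n + 1 : ℕ)).natDegree = n + 2 := by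
      rw [natDegree_X_mul hm1.ne_zero, hd1]
    have hlt : (S R n).natDegree < (X * S R (n + 1 : ℕ)).natDegree := by
      rw [ih1.2, hXSd]; omega
    push_cast at hXS hXSd hlt ⊢
    rw [S_add_two]
    exact ⟨hXS.sub_of_left (degree_lt_degree hlt),
      by rw [natDegree_sub_eq_left_of_natDegree_lt hlt, hXSd]⟩

theorem natDegree_S [Nontrivial R] (n : ℤ) : (S R n).natDegree = (n + 1).natAbs - 1 := by
  obtain ⟨m, rfl | rfl⟩ := n.eq_nat_or_neg
  · rw [(S_natCast_monic_and_natDegree R m).2]; omega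
  · match m with
    | 0 => simp
    | 1 => simp
    | m + 2 =>
      rw [show -((m + 2 : ℕ) : ℤ) = -m - 2 by push_cast; ring, S_neg_sub_two, natDegree_neg,
        (S_natCast_monic_and_natDegree R m).2]
      omega

theorem S_eval_add_of_mul_eq_one {K : Type*} [Field K] {x y : K} (h : x * y = 1) (n : ℤ) :
    (x - y) * (S K n).eval (x + y) = x ^ (n + 1) - y ^ (n + 1) := by
  have hx : x ≠ 0 := left_ne_zero_of_mul_eq_one h
  have hy : y ≠ 0 := right_ne_zero_of_mul_eq_one h
  have step (m : ℤ) : x ^ (m + 2) - y ^ (m + 2) =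
      (x + y) * (x ^ (m + 1) - y ^ (m + 1)) - (x ^ m - y ^ m) := by
    simp only [zpow_add₀ hx, zpow_add₀ hy, zpow_one, zpow_two]
    linear_combination -(x ^ m - y ^ m) * h
  induction n using Polynomial.Chebyshev.induct with
  | zero => simp
  | one => simp; ring
  | add_two n ih1 ih2 =>
    rw [S_add_two, eval_sub, eval_mul, eval_X, show (n : ℤ) + 2 + 1 = n + 1 + 2 by ring, step]
    linear_combination (x + y) * ih1 - ih2
  | neg_add_one n ih1 ih2 =>
    rw [S_sub_one, eval_sub, eval_mul, eval_X, show -(n : ℤ) - 1 + 1 = -n by ring]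
    have := step (-n)
    rw [show -(n : ℤ) + 2 = -n + 1 + 1 by ring] at this
    linear_combination (x + y) * ih1 - ih2 - this

end Polynomial.Chebyshev

open Polynomial.Chebyshev

/-- The `S_k` of the paper: Mathlib's Vieta–Fibonacci `S` is indexed one lower and taken at
`u² + 2`. -/
noncomputable def rileyS (k : ℤ) : ℤ[X] := (S ℤ (k - 1)).comp (X ^ 2 + 2)

noncomputable def rileyPoly (q : ℤ) : ℤ[X] := (1 - X) * rileyS q - rileyS (q - 1)

theorem rileyS_neg (k : ℤ) : rileyS (-k) = -rileyS k := by
  rw [rileyS, rileyS, S_neg_sub_one, neg_comp]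

theorem rileyS_monic {k : ℤ} (hk : 0 < k) : (rileyS k).Monic := by
  obtain ⟨n, rfl⟩ : ∃ n : ℕ, k = n + 1 := ⟨k.toNat - 1, by omega⟩
  rw [rileyS, add_sub_cancel_right]
  exact (S_natCast_monic_and_natDegree ℤ n).1.comp (by monicity!)
    (by rw [natDegree_X_sq_add_two]; simp)

theorem natDegree_rileyS (k : ℤ) : (rileyS k).natDegree = 2 * (k.natAbs - 1) := by
  rw [rileyS, natDegree_comp, natDegree_S, natDegree_X_sq_add_two, sub_add_cancel, mul_comm]

theorem lamp_mul_lamm {u r : ℂ} (h : r ^ 2 = u ^ 4 + 4 * u ^ 2) : lamp u r * lamm u r = 1 := by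
  unfold lamp lamm
  linear_combination -h / 4

theorem lamp_sub_lamm_mul_aeval_rileyS {u r : ℂ} (h : r ^ 2 = u ^ 4 + 4 * u ^ 2) (k : ℤ) :
    (lamp u r - lamm u r) * aeval u (rileyS k) = lamp u r ^ k - lamm u r ^ k := by
  have hsum : lamp u r + lamm u r = u ^ 2 + 2 := by unfold lamp lamm; ring
  have := S_eval_add_of_mul_eq_one (lamp_mul_lamm h) (k - 1)
  rw [hsum, sub_add_cancel] at this
  simpa [rileyS, aeval_comp, aeval_S, map_ofNat] using this

theorem rileyRel_rileyPoly (q : ℤ) : RileyRel q (rileyPoly q) := by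
  intro u r h
  simp only [rileyPoly, map_sub, map_mul, map_one, aeval_X]
  linear_combination (1 - u) * lamp_sub_lamm_mul_aeval_rileyS h q -
    lamp_sub_lamm_mul_aeval_rileyS h (q - 1)

theorem RileyRel.eq_rileyPoly {q : ℤ} {P : ℤ[X]} (hP : RileyRel q P) : P = rileyPoly q := by
  refine map_injective (algebraMap ℤ ℂ) (RingHom.injective_int _) ?_
  have hne : (X ^ 4 + 4 * X ^ 2 : ℂ[X]) ≠ 0 := fun h ↦ by
    have := congrArg (eval 1) h
    norm_num at this
  suffices
      (X ^ 4 + 4 * X ^ 2) * (P.map (algebraMap ℤ ℂ) - (rileyPoly q).map (algebraMap ℤ ℂ)) = 0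
    from sub_eq_zero.1 ((mul_eq_zero.1 this).resolve_left hne)
  refine Polynomial.funext fun u ↦ ?_
  obtain ⟨r, hr⟩ := IsAlgClosed.exists_pow_nat_eq (u ^ 4 + 4 * u ^ 2) two_pos
  have hrel := (hP u r hr).trans (rileyRel_rileyPoly q u r hr).symm
  have hdiff : lamp u r - lamm u r = r := by unfold lamp lamm; ring
  rw [hdiff] at hrel
  simp only [eval_mul, eval_sub, eval_add, eval_pow, eval_X, eval_ofNat, eval_map, ← aeval_def,
    eval_zero]
  linear_combination r * hrel - (aeval u P - aeval u (rileyPoly q)) * hr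

theorem rileyPoly_zero : rileyPoly 0 = 1 := by simp [rileyPoly, rileyS]

theorem rileyPoly_of_pos {q : ℤ} (hq : 0 < q) :
    (rileyPoly q).natDegree = 2 * q.natAbs - 1 ∧ (rileyPoly q).leadingCoeff = -1 := by
  have hS := rileyS_monic hq
  have hlt : (rileyS (q - 1)).natDegree < ((1 - X) * rileyS q).natDegree := by
    rw [hS.natDegree_one_sub_X_mul, natDegree_rileyS, natDegree_rileyS]; omega
  rw [rileyPoly, natDegree_sub_eq_left_of_natDegree_lt hlt,
    leadingCoeff_sub_of_degree_lt (degree_lt_degree hlt), hS.natDegree_one_sub_X_mul,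
    natDegree_rileyS, hS.leadingCoeff_one_sub_X_mul]
  omega

theorem rileyPoly_of_neg {q : ℤ} (hq : q < 0) :
    (rileyPoly q).natDegree = 2 * q.natAbs ∧ (rileyPoly q).leadingCoeff = 1 := by
  have hS := rileyS_monic (neg_pos.2 hq)
  have hS' := rileyS_monic (by omega : 0 < -q + 1)
  have hφ : rileyPoly q = rileyS (-q + 1) - (1 - X) * rileyS (-q) := by
    have h₁ := rileyS_neg (-q)
    have h₂ := rileyS_neg (-q + 1)
    rw [neg_neg] at h₁
    rw [neg_add, neg_neg, ← sub_eq_add_neg] at h₂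
    rw [rileyPoly, h₁, h₂]
    ring
  have hlt : ((1 - X) * rileyS (-q)).natDegree < (rileyS (-q + 1)).natDegree := by
    rw [hS.natDegree_one_sub_X_mul, natDegree_rileyS, natDegree_rileyS]; omega
  rw [hφ, natDegree_sub_eq_left_of_natDegree_lt hlt,
    leadingCoeff_sub_of_degree_lt (degree_lt_degree hlt), natDegree_rileyS, hS'.leadingCoeff]
  omega

theorem stmt_6_general (q : ℤ) (P : Polynomial ℤ) (hP : RileyRel q P) :
    (0 < q → P.natDegree = 2 * q.natAbs - 1) ∧
    (q < 0 → P.natDegree = 2 * q.natAbs) ∧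
    (P.leadingCoeff = 1 ∨ P.leadingCoeff = -1) := by
  rw [hP.eq_rileyPoly]
  rcases lt_trichotomy q 0 with hneg | rfl | hpos
  · obtain ⟨hdeg, hlead⟩ := rileyPoly_of_neg hneg
    exact ⟨fun h ↦ absurd h hneg.not_gt, fun _ ↦ hdeg, Or.inl hlead⟩
  · simp [rileyPoly_zero]
  · obtain ⟨hdeg, hlead⟩ := rileyPoly_of_pos hpos
    exact ⟨fun _ ↦ hdeg, fun h ↦ absurd h hpos.not_gt, Or.inr hlead⟩

/-- deg φ_q = 2q-1 for q > 0, 2|q| for q < 0, and its leading coefficient is ±1. -/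
theorem stmt_6 (q : ℤ) (hq : q ≠ 0) (P : Polynomial ℤ) (hP : RileyRel q P) :
    (0 < q → P.natDegree = 2 * q.natAbs - 1) ∧
    (q < 0 → P.natDegree = 2 * q.natAbs) ∧
    (P.leadingCoeff = 1 ∨ P.leadingCoeff = -1) :=
  stmt_6_general q P hP
end

section
/- For every integer q with |q| > 1 and every root u₀ ∈ ℂ of the Riley polynomial φ_q, one has γ_q(u₀) ≠ 1, where γ_q(u) = (τ_q(u) − 2)/u². Hence the twisted Alexander polynomial of the nonfibered twist knot J(2,2q) at any parabolic representation is not monic. -/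
/-!
Since `φ_q` is irreducible over `ℚ`, it is up to a unit the minimal polynomial of its root `u₀`,
so no nonzero rational polynomial of smaller degree vanishes at `u₀`. Both `γ_q` and `γ_q - 1`
are such polynomials, because `0 < deg γ_q = 2|q| - 2 < deg φ_q`. Hence `γ_q(u₀) ∉ {0, 1}`, and the
quadratic `γ_q(u₀) + δ t + γ_q(u₀) t²` has leading coefficient `γ_q(u₀) ≠ 1`.
-/

open Polynomial

/-- `P` is the polynomial `γ_q`, characterized by
`(λ₊ - 1)(λ₋ - 1)·γ_q(u) = (λ₊^q - 1)(λ₋^q - 1)`. -/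
def GammaRel (q : ℤ) (P : Polynomial ℤ) : Prop :=
  ∀ u r : ℂ, r ^ 2 = u ^ 4 + 4 * u ^ 2 →
    (lamp u r - 1) * (lamm u r - 1) * (Polynomial.aeval u P : ℂ) =
      ((lamp u r) ^ q - 1) * ((lamm u r) ^ q - 1)

theorem Irreducible.aeval_ne_zero_of_natDegree_lt {K B : Type*} [Field K] [Ring B] [Nontrivial B]
    [Algebra K B] {p q : K[X]} {x : B} (hp : Irreducible p) (hpx : aeval x p = 0) (hq : q ≠ 0)
    (hdeg : q.natDegree < p.natDegree) : aeval x q ≠ 0 := by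
  intro hqx
  have hminpoly : (minpoly K x).degree = p.degree := by
    rw [← minpoly.eq_of_irreducible hp hpx,
      degree_mul_C (inv_ne_zero (leadingCoeff_ne_zero.2 hp.ne_zero))]
  have hle : p.degree ≤ q.degree := hminpoly ▸ minpoly.degree_le_of_ne_zero K x hq hqx
  exact hdeg.not_ge (natDegree_le_natDegree hle)

theorem Polynomial.aeval_ne_zero_of_irreducible_map_rat {L : Type*} [Field L] [Algebra ℚ L]
    {P Q : ℤ[X]} {x : L} (hP : Irreducible (P.map (Int.castRingHom ℚ))) (hPx : aeval x P = 0)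
    (hQ : Q ≠ 0) (hdeg : Q.natDegree < P.natDegree) : aeval x Q ≠ 0 := by
  have hmap : ∀ R : ℤ[X], aeval x (R.map (Int.castRingHom ℚ)) = aeval x R :=
    aeval_map_algebraMap ℚ x
  have hnatDegree : ∀ R : ℤ[X], (R.map (Int.castRingHom ℚ)).natDegree = R.natDegree :=
    natDegree_map_eq_of_injective Int.cast_injective
  rw [← hmap]
  refine hP.aeval_ne_zero_of_natDegree_lt (by rwa [hmap]) ?_ (by rwa [hnatDegree, hnatDegree])
  exact (Polynomial.map_ne_zero_iff Int.cast_injective).2 hQ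

theorem Polynomial.leadingCoeff_palindromic_quadratic {R : Type*} [Semiring R] {a : R} (ha : a ≠ 0)
    (b : R) : (C a + C b * X + C a * X ^ 2).leadingCoeff = a := by
  rw [show C a + C b * X + C a * X ^ 2 = C a * X ^ 2 + C b * X + C a by abel]
  exact leadingCoeff_quadratic ha

theorem stmt_12_general (q : ℤ) (hq : 1 < q.natAbs) (G P : Polynomial ℤ)
    (hGdeg : G.natDegree = 2 * q.natAbs - 2)
    (hirr : Irreducible (P.map (Int.castRingHom ℚ)))
    (hPdeg₁ : 0 < q → P.natDegree = 2 * q.natAbs - 1)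
    (hPdeg₂ : q < 0 → P.natDegree = 2 * q.natAbs)
    (u₀ : ℂ) (hroot : Polynomial.aeval u₀ P = 0) :
    (Polynomial.aeval u₀ G : ℂ) ≠ 1 ∧
    ∀ δ : ℂ,
      ¬ (C (Polynomial.aeval u₀ G : ℂ) + C δ * X +
          C (Polynomial.aeval u₀ G : ℂ) * X ^ 2).Monic := by
  have hGpos : 0 < G.natDegree := by omega
  have hGP : G.natDegree < P.natDegree := by
    obtain hneg | hpos : q < 0 ∨ 0 < q := by omega
    · rw [hPdeg₂ hneg]; omega
    · rw [hPdeg₁ hpos]; omega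
  have hG₀ : aeval u₀ G ≠ 0 :=
    aeval_ne_zero_of_irreducible_map_rat hirr hroot (ne_zero_of_natDegree_gt hGpos) hGP
  have hG₁ : aeval u₀ G ≠ 1 := by
    have hsub : (G - C 1).natDegree = G.natDegree := natDegree_sub_C
    have := aeval_ne_zero_of_irreducible_map_rat hirr hroot
      (ne_zero_of_natDegree_gt (hsub ▸ hGpos)) (hsub ▸ hGP) (x := u₀)
    rwa [map_sub, aeval_C, map_one, sub_ne_zero] at this
  refine ⟨hG₁, fun δ hmonic => hG₁ ?_⟩
  rw [← leadingCoeff_palindromic_quadratic hG₀ δ]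
  exact hmonic

/-- For |q| > 1, γ_q ≠ 1 at any root of φ_q; hence the twisted Alexander polynomial
of the nonfibered twist knot J(2,2q) at any parabolic representation is not monic. -/
theorem stmt_12 (q : ℤ) (hq : 1 < q.natAbs) (G P : Polynomial ℤ)
    (hG : GammaRel q G) (hGmonic : G.Monic) (hGdeg : G.natDegree = 2 * q.natAbs - 2)
    (hP : RileyRel q P)
    (hirr : Irreducible (P.map (Int.castRingHom ℚ)))
    (hPdeg₁ : 0 < q → P.natDegree = 2 * q.natAbs - 1)
    (hPdeg₂ : q < 0 → P.natDegree = 2 * q.natAbs)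
    (u₀ : ℂ) (hroot : Polynomial.aeval u₀ P = 0) :
    (Polynomial.aeval u₀ G : ℂ) ≠ 1 ∧
    ∀ δ : ℂ,
      ¬ (C (Polynomial.aeval u₀ G : ℂ) + C δ * X +
          C (Polynomial.aeval u₀ G : ℂ) * X ^ 2).Monic :=
  stmt_12_general q hq G P hGdeg hirr hPdeg₁ hPdeg₂ u₀ hroot
end

section
/- For every integer q > 2 and every root u₀ of the Riley polynomial φ_q, the value δ_q(u₀) is not a rational number. -/
open Polynomial

/-- `D` is the polynomial `δ_q`, the middle coefficient of the twisted
Alexander polynomial, characterized by its value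
`α + β - 2αβ + ((λ₊-λ₋)/(2+λ₊+λ₋))(α-β)` with `α = (λ₊^q-1)/(λ₊-1)`,
`β = (λ₋^q-1)/(λ₋-1)`. -/
def DeltaRel (q : ℤ) (D : Polynomial ℤ) : Prop :=
  ∀ u r : ℂ, r ^ 2 = u ^ 4 + 4 * u ^ 2 →
    lamp u r ≠ 1 → lamm u r ≠ 1 → 2 + lamp u r + lamm u r ≠ 0 →
    (Polynomial.aeval u D : ℂ) =
      ((lamp u r) ^ q - 1) / (lamp u r - 1) + ((lamm u r) ^ q - 1) / (lamm u r - 1)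
        - 2 * (((lamp u r) ^ q - 1) / (lamp u r - 1)) * (((lamm u r) ^ q - 1) / (lamm u r - 1))
        + ((lamp u r - lamm u r) / (2 + lamp u r + lamm u r)) *
            (((lamp u r) ^ q - 1) / (lamp u r - 1) - ((lamm u r) ^ q - 1) / (lamm u r - 1))

/-! An irreducible `p` is, up to a unit, the minimal polynomial of each of its roots `x`, so no
nonzero polynomial of smaller degree vanishes at `x`. If `δ(x)` were rational, `c` say, then
`δ - c` would be such a polynomial, since `deg δ = 2q - 4` lies strictly between `0` and
`deg φ = 2q - 1`. -/

section

variable {K A : Type*} [Field K] [Ring A] [Nontrivial A] [Algebra K A] {x : A} {p g : K[X]}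

theorem Irreducible.natDegree_le_of_aeval_eq_zero (hp : Irreducible p) (hpx : aeval x p = 0)
    (hg : g ≠ 0) (hgx : aeval x g = 0) : p.natDegree ≤ g.natDegree :=
  natDegree_le_of_dvd
    ((Dvd.intro _ (minpoly.eq_of_irreducible hp hpx)).trans (minpoly.dvd K x hgx)) hg

theorem Irreducible.aeval_notMem_range_algebraMap (hp : Irreducible p) (hpx : aeval x p = 0)
    (hg_pos : 0 < g.natDegree) (hg_lt : g.natDegree < p.natDegree) :
    aeval x g ∉ Set.range (algebraMap K A) := by
  rintro ⟨c, hc⟩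
  have hdeg : (g - C c).natDegree = g.natDegree := natDegree_sub_C
  have hle := hp.natDegree_le_of_aeval_eq_zero hpx
    (ne_zero_of_natDegree_gt (hdeg ▸ hg_pos)) (by rw [map_sub, aeval_C, hc, sub_self])
  omega

end

theorem stmt_18_general (q : ℤ) (hq : 2 < q) (D P : Polynomial ℤ)
    (hDdeg : D.natDegree = 2 * q.toNat - 4)
    (hirr : Irreducible (P.map (Int.castRingHom ℚ)))
    (hPdeg : P.natDegree = 2 * q.toNat - 1)
    (u₀ : ℂ) (hroot : Polynomial.aeval u₀ P = 0) :
    ¬ ∃ x : ℚ, (Polynomial.aeval u₀ D : ℂ) = (x : ℂ) := by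
  rintro ⟨x, hx⟩
  have hcast : Function.Injective (Int.castRingHom ℚ) := Int.cast_injective
  have hroot' : aeval u₀ (P.map (Int.castRingHom ℚ)) = 0 := by
    rwa [← algebraMap_int_eq, aeval_map_algebraMap]
  refine hirr.aeval_notMem_range_algebraMap (g := D.map (Int.castRingHom ℚ)) hroot' ?_ ?_ ⟨x, ?_⟩
  · rw [natDegree_map_eq_of_injective hcast, hDdeg]
    omega
  · rw [natDegree_map_eq_of_injective hcast, natDegree_map_eq_of_injective hcast, hDdeg, hPdeg]
    omega
  · rw [← algebraMap_int_eq, aeval_map_algebraMap, hx, eq_ratCast]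

/-- For q > 2 and any root u₀ of the Riley polynomial φ_q, δ_q(u₀) is irrational. -/
theorem stmt_18 (q : ℤ) (hq : 2 < q) (D P : Polynomial ℤ)
    (hD : DeltaRel q D) (hDdeg : D.natDegree = 2 * q.toNat - 4)
    (hP : RileyRel q P)
    (hirr : Irreducible (P.map (Int.castRingHom ℚ)))
    (hPdeg : P.natDegree = 2 * q.toNat - 1)
    (hlead : P.leadingCoeff = 1 ∨ P.leadingCoeff = -1)
    (u₀ : ℂ) (hroot : Polynomial.aeval u₀ P = 0) :
    ¬ ∃ x : ℚ, (Polynomial.aeval u₀ D : ℂ) = (x : ℂ) :=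
  stmt_18_general q hq D P hDdeg hirr hPdeg u₀ hroot
end
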